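/- The left Cramer identity holds for Manin matrices: if M is an n×n Manin matrix and M^adj is its adjugate whose (i,j) entry is (−1)^{i+j} times the column determinant of the (j,i) minor of M, then M^adj · M = det^col(M) · Id. -/

import Mathlib

/-!
For a Manin matrix, permuting the columns multiplies the column determinant by the sign of the
permutation. For an adjacent transposition `(p p+1)` the terms of `σ` and `σ * (p p+1)` pair
off, and the cross relation `[M_{ap}, M_{b,p+1}] = [M_{bp}, M_{a,p+1}]` is exactly what makes each
pair cancel. Hence `det^col` can be expanded along any column `i`: move column `i` to the last
position, where every ordered product ends with the entry `M_{ji}` of that column, so it stays on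
the right of the minor as in `M^adj · M`.

Applied to `M` with column `i` replaced by column `k`, this expansion computes `(M^adj · M)_{ik}`.
For `i = k` the matrix is `M` itself; for `i ≠ k` it has two equal columns, and after moving them
next to each other the paired terms cancel because the entries of a column commute.
-/

/-- The column determinant of a square matrix over a noncommutative ring:
`det^col M = ∑_σ sgn σ · M_{σ(1),1} M_{σ(2),2} ⋯ M_{σ(n),n}` (product left to right). -/
def detCol {R : Type*} [Ring R] {n : ℕ} (M : Matrix (Fin n) (Fin n) R) : R :=
  ∑ σ : Equiv.Perm (Fin n),
    (Equiv.Perm.sign σ : ℤ) • (List.ofFn fun t => M (σ t) t).prod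

/-- The adjugate of a square matrix over a noncommutative ring, formed from column
determinants of the `(n-1) × (n-1)` minors exactly as in the commutative case: its `(i,j)`
entry is `(-1)^{i+j}` times the column determinant of the minor obtained by deleting
row `j` and column `i`. -/
def adjCol {R : Type*} [Ring R] {n : ℕ} (M : Matrix (Fin (n + 1)) (Fin (n + 1)) R) :
    Matrix (Fin (n + 1)) (Fin (n + 1)) R :=
  fun i j => ((-1 : ℤ) ^ ((i : ℕ) + (j : ℕ))) • detCol (M.submatrix j.succAbove i.succAbove)

open Equiv Equiv.Perm

namespace Matrix

variable {l m n o R : Type*} [Ring R]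

def ColumnsCommute (M : Matrix m n R) : Prop :=
  ∀ i k j, Commute (M i j) (M k j)

def ManinCross (M : Matrix m n R) : Prop :=
  ∀ i j k l, M i j * M k l - M k l * M i j = M k j * M i l - M i l * M k j

theorem ColumnsCommute.submatrix {M : Matrix m n R} (hM : M.ColumnsCommute)
    (e : l → m) (f : o → n) : (M.submatrix e f).ColumnsCommute :=
  fun i k j => hM (e i) (e k) (f j)

theorem ManinCross.submatrix {M : Matrix m n R} (hM : M.ManinCross)
    (e : l → m) (f : o → n) : (M.submatrix e f).ManinCross :=
  fun i j k l => hM (e i) (f j) (e k) (f l)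

end Matrix

theorem List.exists_prod_ofFn_eq_mul_adjacent {M : Type*} [Monoid M] {n : ℕ}
    (g : Fin (n + 1) → M) (p : Fin n) :
    ∃ P Q : M, ∀ u : Fin (n + 1) → M, (∀ t, t ≠ p.castSucc → t ≠ p.succ → u t = g t) →
      (List.ofFn u).prod = P * u p.castSucc * u p.succ * Q := by
  induction n with
  | zero => exact p.elim0
  | succ n ih =>
    induction p using Fin.cases with
    | zero =>
      refine ⟨1, (List.ofFn fun t => g t.succ.succ).prod, fun u hu => ?_⟩
      have htail : (fun t : Fin n => u t.succ.succ) = fun t => g t.succ.succ :=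
        funext fun t =>
          hu _ (Fin.succ_ne_zero _) fun h => Fin.succ_ne_zero t (Fin.succ_injective _ h)
      simp [List.ofFn_succ, htail, mul_assoc]
    | succ p =>
      obtain ⟨P, Q, hPQ⟩ := ih (fun t => g t.succ) p
      refine ⟨g 0 * P, Q, fun u hu => ?_⟩
      have hhead : u 0 = g 0 :=
        hu 0 (Fin.succ_castSucc p ▸ (Fin.succ_ne_zero _).symm) (Fin.succ_ne_zero _).symm
      have htail := hPQ (fun t => u t.succ) fun t h₁ h₂ =>
        hu _ (by rwa [← Fin.succ_castSucc, Ne, Fin.succ_inj]) (by rwa [Ne, Fin.succ_inj])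
      rw [List.ofFn_succ, List.prod_cons, hhead, htail, ← Fin.succ_castSucc]
      simp only [mul_assoc]

theorem Equiv.Perm.sum_eq_zero_of_add_mul_swap {α M : Type*} [DecidableEq α] [Fintype α]
    [AddCommMonoid M] (F : Perm α → M) {a b : α} (hab : a ≠ b)
    (hF : ∀ σ, F σ + F (σ * swap a b) = 0) : ∑ σ, F σ = 0 :=
  Finset.sum_ninvolution (· * swap a b) hF
    (fun σ _ h => hab (by simpa using h)) (fun _ => Finset.mem_univ _)
    (fun σ => by simp [mul_assoc])

section DetCol

variable {R : Type*} [Ring R]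

theorem detCol_submatrix_swap_castSucc_succ {n : ℕ} {A : Matrix (Fin (n + 1)) (Fin (n + 1)) R}
    (hA : A.ManinCross) (p : Fin n) :
    detCol (A.submatrix id (swap p.castSucc p.succ)) = -detCol A := by
  have hab : p.castSucc ≠ p.succ := Fin.castSucc_lt_succ.ne
  have hoff : ∀ t, t ≠ p.castSucc → t ≠ p.succ → swap p.castSucc p.succ t = t :=
    fun t => swap_apply_of_ne_of_ne
  rw [eq_neg_iff_add_eq_zero, detCol, detCol, ← Finset.sum_add_distrib]
  refine sum_eq_zero_of_add_mul_swap _ hab fun σ => ?_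
  obtain ⟨P, Q, hPQ⟩ := List.exists_prod_ofFn_eq_mul_adjacent (fun t => A (σ t) t) p
  rw [hPQ _ fun t ha hb => by simp [hoff t ha hb], hPQ _ fun _ _ _ => rfl,
    hPQ _ fun t ha hb => by simp [hoff t ha hb], hPQ _ fun t ha hb => by simp [hoff t ha hb]]
  simp only [Perm.sign_mul, sign_swap hab, Perm.mul_apply, swap_apply_left, swap_apply_right,
    Matrix.submatrix_apply, id, Units.val_neg, mul_neg, mul_one, neg_smul]
  set x := A (σ p.castSucc) p.castSucc
  set y := A (σ p.succ) p.succ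
  set x' := A (σ p.succ) p.castSucc
  set y' := A (σ p.castSucc) p.succ
  have hxy : x * y - y * x = x' * y' - y' * x' := hA _ _ _ _
  have hsum : P * y' * x' * Q + P * x * y * Q - (P * y * x * Q + P * x' * y' * Q) = 0 := by
    rw [show P * y' * x' * Q + P * x * y * Q - (P * y * x * Q + P * x' * y' * Q)
        = P * ((x * y - y * x) - (x' * y' - y' * x')) * Q by noncomm_ring,
      hxy, sub_self, mul_zero, zero_mul]
  rw [← neg_add, ← smul_add, ← smul_add, ← sub_eq_add_neg, ← smul_sub, hsum, smul_zero]

theorem detCol_submatrix_perm {n : ℕ} {A : Matrix (Fin (n + 1)) (Fin (n + 1)) R}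
    (hA : A.ManinCross) (g : Perm (Fin (n + 1))) :
    detCol (A.submatrix id g) = (sign g : ℤ) • detCol A := by
  have hg : g ∈ Submonoid.closure (Set.range fun p : Fin n => swap p.castSucc p.succ) := by
    rw [mclosure_swap_castSucc_succ]; trivial
  induction hg using Submonoid.closure_induction generalizing A with
  | mem _ h =>
    obtain ⟨p, rfl⟩ := h
    rw [detCol_submatrix_swap_castSucc_succ hA, sign_swap Fin.castSucc_lt_succ.ne]
    simp
  | one => simp
  | mul g h _ _ ihg ihh =>
    change detCol ((A.submatrix id g).submatrix id h) = _
    rw [ihh (hA.submatrix id g), ihg hA, smul_smul, Perm.sign_mul, Units.val_mul, mul_comm]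

theorem detCol_zero_of_column_castSucc_eq_succ {n : ℕ}
    {A : Matrix (Fin (n + 1)) (Fin (n + 1)) R} (hA : A.ColumnsCommute) (p : Fin n)
    (hp : ∀ x, A x p.castSucc = A x p.succ) : detCol A = 0 := by
  have hab : p.castSucc ≠ p.succ := Fin.castSucc_lt_succ.ne
  refine sum_eq_zero_of_add_mul_swap _ hab fun σ => ?_
  obtain ⟨P, Q, hPQ⟩ := List.exists_prod_ofFn_eq_mul_adjacent (fun t => A (σ t) t) p
  rw [hPQ _ fun _ _ _ => rfl, hPQ _ fun t ha hb => by simp [swap_apply_of_ne_of_ne ha hb]]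
  simp only [Perm.sign_mul, sign_swap hab, Perm.mul_apply, swap_apply_left, swap_apply_right,
    Units.val_neg, mul_neg, mul_one, neg_smul, hp]
  rw [mul_assoc P, (hA _ _ _).eq, ← mul_assoc, add_neg_cancel]

theorem Equiv.Perm.exists_apply_eq_and_apply_eq {α : Type*} [DecidableEq α] {a b p q : α}
    (hab : a ≠ b) (hpq : p ≠ q) : ∃ τ : Perm α, τ a = p ∧ τ b = q := by
  have hq : swap a p q ≠ a := fun h => hpq (by rw [← swap_apply_self a p q, h, swap_apply_left])
  refine ⟨swap a p * swap b (swap a p q), ?_, ?_⟩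
  · rw [Perm.mul_apply, swap_apply_of_ne_of_ne hab hq.symm, swap_apply_left]
  · rw [Perm.mul_apply, swap_apply_left, swap_apply_self]

theorem detCol_zero_of_column_eq {n : ℕ} {A : Matrix (Fin (n + 1)) (Fin (n + 1)) R}
    (hcomm : A.ColumnsCommute) (hA : A.ManinCross) {p q : Fin (n + 1)} (hpq : p ≠ q)
    (hcol : ∀ x, A x p = A x q) : detCol A = 0 := by
  cases n with
  | zero => exact absurd (Subsingleton.elim (α := Fin 1) p q) hpq
  | succ n =>
    obtain ⟨τ, hτp, hτq⟩ :=
      exists_apply_eq_and_apply_eq (Fin.castSucc_lt_succ (i := (0 : Fin (n + 1)))).ne hpq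
    have hτ := detCol_submatrix_perm hA τ
    rw [detCol_zero_of_column_castSucc_eq_succ (hcomm.submatrix id τ) 0
      fun x => by simp only [Matrix.submatrix_apply, id, hτp, hτq, hcol]] at hτ
    rw [← Units.smul_def, eq_comm, smul_eq_zero_iff_eq] at hτ
    exact hτ

def Equiv.Perm.extendLast {n : ℕ} (π : Perm (Fin n)) : Perm (Fin (n + 1)) :=
  finSuccEquivLast.symm.permCongr (optionCongr π)

@[simp]
theorem Equiv.Perm.extendLast_castSucc {n : ℕ} (π : Perm (Fin n)) (t : Fin n) :
    π.extendLast t.castSucc = (π t).castSucc := by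
  simp [extendLast, permCongr_apply, finSuccEquivLast_castSucc]

@[simp]
theorem Equiv.Perm.extendLast_last {n : ℕ} (π : Perm (Fin n)) :
    π.extendLast (Fin.last n) = Fin.last n := by
  simp [extendLast, permCongr_apply]

@[simp]
theorem Equiv.Perm.sign_extendLast {n : ℕ} (π : Perm (Fin n)) :
    sign π.extendLast = sign π := by
  rw [extendLast, sign_permCongr, optionCongr_sign]

def Fin.succAbovePerm {n : ℕ} (j : Fin (n + 1)) (π : Perm (Fin n)) : Perm (Fin (n + 1)) :=
  Fin.cycleIcc j (Fin.last n) * π.extendLast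

namespace Fin

variable {n : ℕ}

@[simp]
theorem succAbovePerm_last (j : Fin (n + 1)) (π : Perm (Fin n)) :
    succAbovePerm j π (last n) = j := by
  rw [succAbovePerm, Perm.mul_apply, Perm.extendLast_last, cycleIcc_of_last (le_last j)]

@[simp]
theorem succAbovePerm_castSucc (j : Fin (n + 1)) (π : Perm (Fin n)) (t : Fin n) :
    succAbovePerm j π t.castSucc = j.succAbove (π t) := by
  rw [succAbovePerm, Perm.mul_apply, Perm.extendLast_castSucc, ← succAbove_last,
    ← Function.comp_apply (f := cycleIcc j (last n)), cycleIcc_comp_succAbove _ _ (le_last j)]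

theorem sign_succAbovePerm (j : Fin (n + 1)) (π : Perm (Fin n)) :
    sign (succAbovePerm j π) = (-1) ^ (n - j : ℕ) * sign π := by
  rw [succAbovePerm, Perm.sign_mul, sign_cycleIcc_of_le (le_last j), val_last,
    Perm.sign_extendLast]

theorem bijective_uncurry_succAbovePerm :
    Function.Bijective (Function.uncurry (succAbovePerm (n := n))) := by
  refine (Fintype.bijective_iff_injective_and_card _).mpr ⟨?_, ?_⟩
  · rintro ⟨j, π⟩ ⟨j', π'⟩ h
    obtain rfl : j = j' := by simpa using congrArg (· (last n)) h
    rw [show π = π' from Equiv.ext fun t => by simpa using congrArg (· t.castSucc) h]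
  · simp [Fintype.card_perm, Nat.factorial_succ]

end Fin

theorem detCol_succ_column_last {n : ℕ} (A : Matrix (Fin (n + 1)) (Fin (n + 1)) R) :
    detCol A = ∑ j : Fin (n + 1), ((-1 : ℤ) ^ (n - j : ℕ)) •
      (detCol (A.submatrix j.succAbove Fin.castSucc) * A j (Fin.last n)) := by
  rw [detCol, ← Fin.bijective_uncurry_succAbovePerm.sum_comp, Fintype.sum_prod_type]
  refine Finset.sum_congr rfl fun j _ => ?_
  rw [detCol, Finset.sum_mul, Finset.smul_sum]
  refine Finset.sum_congr rfl fun π _ => ?_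
  rw [Function.uncurry_apply_pair, List.ofFn_succ', List.prod_concat, Fin.sign_succAbovePerm]
  simp [mul_smul, mul_assoc]

theorem detCol_succ_column {n : ℕ} {A : Matrix (Fin (n + 1)) (Fin (n + 1)) R}
    (hA : A.ManinCross) (i : Fin (n + 1)) :
    detCol A = ∑ j : Fin (n + 1), ((-1 : ℤ) ^ ((i : ℕ) + j)) •
      (detCol (A.submatrix j.succAbove i.succAbove) * A j i) := by
  set c := Fin.cycleIcc i (Fin.last n)
  have hc_last : c (Fin.last n) = i := Fin.cycleIcc_of_last (Fin.le_last i)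
  have hc_castSucc : ⇑c ∘ Fin.castSucc = i.succAbove := by
    rw [← Fin.succAbove_last]; exact Fin.cycleIcc_comp_succAbove _ _ (Fin.le_last i)
  have hsign : ((sign c : ℤˣ) : ℤ) = (-1) ^ (n - i : ℕ) := by
    rw [Fin.sign_cycleIcc_of_le (Fin.le_last i), Fin.val_last]; simp
  have hperm := detCol_submatrix_perm hA c
  rw [detCol_succ_column_last, hsign] at hperm
  calc detCol A = (-1 : ℤ) ^ (n - i : ℕ) • ((-1 : ℤ) ^ (n - i : ℕ) • detCol A) := by
        rw [smul_smul, ← pow_add, Even.neg_one_pow ⟨_, rfl⟩, one_smul]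
    _ = _ := by
      rw [← hperm, Finset.smul_sum]
      refine Finset.sum_congr rfl fun j _ => ?_
      rw [smul_smul, ← pow_add, neg_one_pow_eq_pow_mod_two,
        neg_one_pow_eq_pow_mod_two (n := (i : ℕ) + j), Matrix.submatrix_submatrix,
        Function.id_comp, hc_castSucc, Matrix.submatrix_apply, hc_last, id]
      congr 2
      omega

theorem adjCol_mul_apply {n : ℕ} {M : Matrix (Fin (n + 1)) (Fin (n + 1)) R}
    (hM : M.ManinCross) (i k : Fin (n + 1)) :
    (adjCol M * M) i k = detCol (M.submatrix id (Function.update id i k)) := by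
  rw [Matrix.mul_apply, detCol_succ_column (hM.submatrix id _) i]
  refine Finset.sum_congr rfl fun j _ => ?_
  have hminor : Function.update id i k ∘ i.succAbove = i.succAbove :=
    funext fun t => Function.update_of_ne (Fin.succAbove_ne i t) _ _
  rw [adjCol, Matrix.submatrix_submatrix, Function.id_comp, hminor, Matrix.submatrix_apply,
    Function.update_self, id, smul_mul_assoc]

end DetCol

/-- The left Cramer identity for Manin matrices: if `M` is a Manin matrix then
`M^adj · M = det^col M · Id`. -/
theorem manin_adjCol_mul
    {R : Type*} [Ring R] {n : ℕ} (M : Matrix (Fin (n + 1)) (Fin (n + 1)) R)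
    (hcol : ∀ i k j, Commute (M i j) (M k j))
    (hcross : ∀ i j k l, M i j * M k l - M k l * M i j = M k j * M i l - M i l * M k j) :
    adjCol M * M = detCol M • (1 : Matrix (Fin (n + 1)) (Fin (n + 1)) R) := by
  have hcomm : M.ColumnsCommute := hcol
  have hM : M.ManinCross := hcross
  ext i k
  rw [adjCol_mul_apply hM, Matrix.smul_apply]
  by_cases hik : i = k
  · subst hik
    rw [Matrix.one_apply_eq, smul_eq_mul, mul_one,
      show Function.update id i i = id from Function.update_eq_self i id, Matrix.submatrix_id_id]
  · rw [Matrix.one_apply_ne hik, smul_zero]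
    refine detCol_zero_of_column_eq (hcomm.submatrix _ _) (hM.submatrix _ _) hik fun x => ?_
    simp [Function.update_of_ne (Ne.symm hik)]
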